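/- Let G be a finite graph with vertices v_1, ..., v_k such that for each ℓ with 2 ≤ ℓ ≤ k there exists m(ℓ) < ℓ with N_{G_ℓ}[v_ℓ] ⊆ N_{G_ℓ}[v_{m(ℓ)}], where G_ℓ is the subgraph induced by {v_1, ..., v_ℓ}. Then the clique complex of G is contractible. -/
import Mathlib


def stdBasisVec {V : Type*} [DecidableEq V] (v : V) : V → ℝ := fun i => if i = v then 1 else 0

/-- The standard geometric realization of the clique complex of a finite simple graph `G`. -/
def cliqueRealization {V : Type*} [Fintype V] [DecidableEq V] (G : SimpleGraph V) :
    Set (V → ℝ) :=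
  ⋃ s ∈ {s : Finset V | G.IsClique (s : Set V)}, convexHull ℝ (stdBasisVec '' (s : Set V))

/-- The closed neighbourhood `N[v] = {v} ∪ {u : uv ∈ E(G)}`. -/
def closedNbhd {V : Type*} (G : SimpleGraph V) (v : V) : Set V := insert v {u | G.Adj v u}


lemma mem_hull_iff {V : Type*} [Fintype V] [DecidableEq V] (s : Finset V) (x : V → ℝ) :
    x ∈ convexHull ℝ (stdBasisVec '' (s : Set V)) ↔
      (∀ i, 0 ≤ x i) ∧ (∀ i, i ∉ s → x i = 0) ∧ ∑ i ∈ s, x i = 1 := by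
  constructor
  · intro hx
    have hconv : Convex ℝ {y : V → ℝ | (∀ i, 0 ≤ y i) ∧ (∀ i, i ∉ s → y i = 0) ∧ ∑ i ∈ s, y i = 1} := by
      intro y hy z hz a b ha hb hab
      refine ⟨fun i => by have := hy.1 i; have := hz.1 i; simp only [Pi.add_apply, Pi.smul_apply, smul_eq_mul]; positivity, fun i hi => by simp [Pi.add_apply, hy.2.1 i hi, hz.2.1 i hi], ?_⟩
      simp only [Pi.add_apply, Pi.smul_apply, smul_eq_mul, Finset.sum_add_distrib, ← Finset.mul_sum, hy.2.2, hz.2.2, mul_one, hab]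
    have hsub : stdBasisVec '' (s : Set V) ⊆ {y : V → ℝ | (∀ i, 0 ≤ y i) ∧ (∀ i, i ∉ s → y i = 0) ∧ ∑ i ∈ s, y i = 1} := by
      rintro _ ⟨v, hv, rfl⟩
      refine ⟨fun i => by unfold stdBasisVec; positivity, fun i hi => ?_, ?_⟩
      · simp only [stdBasisVec, ite_eq_right_iff]
        rintro rfl; exact absurd hv hi
      · simp [stdBasisVec, Finset.sum_ite_eq', Finset.mem_coe.mp hv]
    exact convexHull_min hsub hconv hx
  · rintro ⟨h0, hz, h1⟩
    have hx : x = s.centerMass x stdBasisVec := by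
      rw [Finset.centerMass, h1, inv_one, one_smul]
      funext j
      simp only [Finset.sum_apply, Pi.smul_apply, stdBasisVec, smul_eq_mul, mul_ite, mul_one, mul_zero]
      rw [Finset.sum_ite_eq s j x]
      by_cases hj : j ∈ s
      · simp [hj]
      · simp [hj, hz j hj]
    rw [hx]
    exact s.centerMass_mem_convexHull (fun i _ => h0 i) (by rw [h1]; norm_num)
      (fun i hi => Set.mem_image_of_mem _ hi)

lemma mem_cliqueRealization_iff {V : Type*} [Fintype V] [DecidableEq V] (G : SimpleGraph V)
    (x : V → ℝ) :
    x ∈ cliqueRealization G ↔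
      (∀ i, 0 ≤ x i) ∧ (∑ i, x i = 1) ∧ G.IsClique {i | x i ≠ 0} := by
  constructor
  · intro hx
    simp only [cliqueRealization, Set.mem_iUnion, Set.mem_setOf_eq] at hx
    obtain ⟨s, hs, hmem⟩ := hx
    rw [mem_hull_iff] at hmem
    refine ⟨hmem.1, ?_, ?_⟩
    · rw [← hmem.2.2]
      exact (Finset.sum_subset (Finset.subset_univ s) (fun i _ hi => hmem.2.1 i hi)).symm
    · exact hs.subset (fun i hi => by by_contra hc; exact hi (hmem.2.1 i (by simpa using hc)))
  · rintro ⟨h0, h1, hcl⟩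
    classical
    simp only [cliqueRealization, Set.mem_iUnion, Set.mem_setOf_eq]
    refine ⟨Finset.univ.filter (fun i => x i ≠ 0), ?_, ?_⟩
    · convert hcl using 1
      ext i; simp
    · rw [mem_hull_iff]
      refine ⟨h0, fun i hi => by simpa using hi, ?_⟩
      rw [Finset.sum_filter_ne_zero]
      exact h1

/-- Points of the clique complex supported on the first `n+1` vertices. -/
def truncReal {k : ℕ} (G : SimpleGraph (Fin k)) (n : ℕ) : Set (Fin k → ℝ) :=
  {x | x ∈ cliqueRealization G ∧ ∀ i : Fin k, n < i.val → x i = 0}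

/-- The retraction pushing the mass at `ℓ` onto `m`. -/
def retr {k : ℕ} (ℓ m : Fin k) (x : Fin k → ℝ) : Fin k → ℝ :=
  fun i => if i = ℓ then 0 else if i = m then x m + x ℓ else x i

@[fun_prop] lemma continuous_retr {k : ℕ} (ℓ m : Fin k) : Continuous (retr ℓ m) := by
  refine continuous_pi fun i => ?_
  by_cases h1 : i = ℓ
  · simp only [retr, if_pos h1]; fun_prop
  · by_cases h2 : i = m
    · simp only [retr, if_neg h1, if_pos h2]; fun_prop
    · simp only [retr, if_neg h1, if_neg h2]; fun_prop

section Step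

variable {k : ℕ} {G : SimpleGraph (Fin k)} {n : ℕ} {ℓ m : Fin k}

lemma key_adj (hℓ : ℓ.val = n + 1) (hm : m < ℓ)
    (hdom : ∀ w : Fin k, w ≤ ℓ → (w = ℓ ∨ G.Adj ℓ w) → (w = m ∨ G.Adj m w))
    {x : Fin k → ℝ} (hx : x ∈ truncReal G (n + 1)) (hxl : x ℓ ≠ 0) :
    ∀ w : Fin k, x w ≠ 0 → w ≠ m → G.Adj m w := by
  intro w hw hwm
  have hwle : w ≤ ℓ := by
    rw [Fin.le_def, hℓ]
    by_contra hc
    exact hw (hx.2 w (by omega))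
  have hNl : w = ℓ ∨ G.Adj ℓ w := by
    by_cases hwl : w = ℓ
    · exact Or.inl hwl
    · refine Or.inr ?_
      have hcl := (mem_cliqueRealization_iff G x).mp hx.1 |>.2.2
      exact hcl (Set.mem_setOf_eq ▸ hxl) (Set.mem_setOf_eq ▸ hw) (fun hc => hwl hc.symm)
  rcases hdom w hwle hNl with h | h
  · exact absurd h hwm
  · exact h

lemma retr_sum {x : Fin k → ℝ} (hml : m ≠ ℓ) : ∑ i, retr ℓ m x i = ∑ i, x i := by
  have : ∀ i, retr ℓ m x i =
      x i + (if i = m then x ℓ else 0) - (if i = ℓ then x ℓ else 0) := by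
    intro i
    by_cases h1 : i = ℓ <;> by_cases h2 : i = m <;>
      simp_all [retr] <;> ring
  simp only [this, Finset.sum_sub_distrib, Finset.sum_add_distrib, Finset.sum_ite_eq',
    Finset.mem_univ, if_true]
  ring

/-- the segment from `x` to `retr x` stays inside `truncReal G (n+1)`. -/
lemma seg_mem (hℓ : ℓ.val = n + 1) (hm : m < ℓ)
    (hdom : ∀ w : Fin k, w ≤ ℓ → (w = ℓ ∨ G.Adj ℓ w) → (w = m ∨ G.Adj m w))
    {x : Fin k → ℝ} (hx : x ∈ truncReal G (n + 1)) {a b : ℝ} (ha : 0 ≤ a) (hb : 0 ≤ b)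
    (hab : a + b = 1) : a • x + b • retr ℓ m x ∈ truncReal G (n + 1) := by
  have hml : m ≠ ℓ := hm.ne
  obtain ⟨h0, h1, hcl⟩ := (mem_cliqueRealization_iff G x).mp hx.1
  set y := a • x + b • retr ℓ m x with hy
  have hynn : ∀ i, 0 ≤ y i := by
    intro i
    have : 0 ≤ retr ℓ m x i := by
      unfold retr
      split_ifs
      · exact le_refl 0
      · exact add_nonneg (h0 m) (h0 ℓ)
      · exact h0 i
    have := h0 i
    simp only [hy, Pi.add_apply, Pi.smul_apply, smul_eq_mul]
    positivity
  have hysum : ∑ i, y i = 1 := by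
    simp only [hy, Pi.add_apply, Pi.smul_apply, smul_eq_mul, Finset.sum_add_distrib,
      ← Finset.mul_sum, retr_sum hml, h1, mul_one]
    exact hab
  have hsupp : {i | y i ≠ 0} ⊆ insert m {i | x i ≠ 0} := by
    intro i hi
    simp only [Set.mem_setOf_eq, hy, Pi.add_apply, Pi.smul_apply, smul_eq_mul] at hi
    by_cases h2 : i = m
    · exact Set.mem_insert_iff.mpr (Or.inl h2)
    · refine Set.mem_insert_iff.mpr (Or.inr ?_)
      simp only [Set.mem_setOf_eq]
      intro hxi
      apply hi
      by_cases h1' : i = ℓ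
      · subst h1'
        simp [retr, hxi]
      · simp [retr, h1', h2, hxi]
  refine ⟨(mem_cliqueRealization_iff G y).mpr ⟨hynn, hysum, ?_⟩, ?_⟩
  · by_cases hxl : x ℓ = 0
    · -- then y = x on the support level: retr x = x
      have hr : retr ℓ m x = x := by
        funext i
        by_cases h1' : i = ℓ <;> by_cases h2 : i = m <;> simp_all [retr]
      have : y = x := by
        rw [hy, hr, ← add_smul, hab, one_smul]
      rw [this]; exact hcl
    · have hbig : G.IsClique (insert m {i | x i ≠ 0}) := by
        intro u hu w hw hne
        rcases Set.mem_insert_iff.mp hu with rfl | hu' <;>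
          rcases Set.mem_insert_iff.mp hw with h | hw'
        · exact absurd h.symm hne
        · exact key_adj hℓ hm hdom hx hxl w hw' (fun hc => hne hc.symm)
        · subst h; exact (key_adj hℓ hm hdom hx hxl u hu' hne).symm
        · exact hcl hu' hw' hne
      exact hbig.subset hsupp
  · intro i hi
    have hxi : x i = 0 := hx.2 i hi
    have hil : i ≠ ℓ := by
      intro hc; subst hc; omega
    have him : i ≠ m := by
      intro hc; subst hc
      have := hm
      rw [Fin.lt_def, hℓ] at this
      omega
    simp [hy, retr, hil, him, hxi]

lemma retr_mem (hℓ : ℓ.val = n + 1) (hm : m < ℓ)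
    (hdom : ∀ w : Fin k, w ≤ ℓ → (w = ℓ ∨ G.Adj ℓ w) → (w = m ∨ G.Adj m w))
    {x : Fin k → ℝ} (hx : x ∈ truncReal G (n + 1)) : retr ℓ m x ∈ truncReal G n := by
  have hml : m ≠ ℓ := hm.ne
  obtain ⟨h0, h1, hcl⟩ := (mem_cliqueRealization_iff G x).mp hx.1
  have h0' : ∀ i, 0 ≤ retr ℓ m x i := by
    intro i
    unfold retr
    split_ifs
    · exact le_refl 0
    · exact add_nonneg (h0 m) (h0 ℓ)
    · exact h0 i
  refine ⟨(mem_cliqueRealization_iff G _).mpr ⟨h0', by rw [retr_sum hml, h1], ?_⟩, ?_⟩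
  · by_cases hxl : x ℓ = 0
    · have hr : retr ℓ m x = x := by
        funext i
        by_cases h1' : i = ℓ <;> by_cases h2 : i = m <;> simp_all [retr]
      rw [hr]; exact hcl
    · have hbig : G.IsClique (insert m {i | x i ≠ 0}) := by
        intro u hu w hw hne
        rcases Set.mem_insert_iff.mp hu with rfl | hu' <;>
          rcases Set.mem_insert_iff.mp hw with h | hw'
        · exact absurd h.symm hne
        · exact key_adj hℓ hm hdom hx hxl w hw' (fun hc => hne hc.symm)
        · subst h; exact (key_adj hℓ hm hdom hx hxl u hu' hne).symm
        · exact hcl hu' hw' hne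
      refine hbig.subset ?_
      intro i hi
      simp only [Set.mem_setOf_eq] at hi
      by_cases h2 : i = m
      · exact Set.mem_insert_iff.mpr (Or.inl h2)
      · refine Set.mem_insert_iff.mpr (Or.inr ?_)
        by_cases h1' : i = ℓ
        · subst h1'; simp [retr] at hi
        · simp only [retr, h1', h2, if_false] at hi
          exact hi
  · intro i hi
    by_cases h1' : i = ℓ
    · simp [retr, h1']
    · have him : i ≠ m := by
        intro hc; subst hc
        rw [Fin.lt_def, hℓ] at hm
        omega
      have : x i = 0 := by
        refine hx.2 i ?_
        have : i.val ≠ n + 1 := fun hc => h1' (Fin.ext (by rw [hℓ]; exact hc))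
        omega
      simp [retr, h1', him, this]

lemma retr_fix {x : Fin k → ℝ} (hℓ : ℓ.val = n + 1) (hx : x ∈ truncReal G n) :
    retr ℓ m x = x := by
  have hxl : x ℓ = 0 := hx.2 ℓ (by omega)
  funext i
  by_cases h1 : i = ℓ <;> by_cases h2 : i = m <;> simp_all [retr]

end Step

section Main

variable {k : ℕ} {G : SimpleGraph (Fin k)} {n : ℕ} {ℓ m : Fin k}

lemma step_contractible (hℓ : ℓ.val = n + 1) (hm : m < ℓ)
    (hdom : ∀ w : Fin k, w ≤ ℓ → (w = ℓ ∨ G.Adj ℓ w) → (w = m ∨ G.Adj m w))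
    (hc : ContractibleSpace ↥(truncReal G n)) :
    ContractibleSpace ↥(truncReal G (n + 1)) := by
  have hsub : truncReal G n ⊆ truncReal G (n + 1) := by
    rintro x ⟨hx1, hx2⟩
    exact ⟨hx1, fun i hi => hx2 i (by omega)⟩
  let F : C(↥(truncReal G (n + 1)), ↥(truncReal G n)) :=
    ⟨fun x => ⟨retr ℓ m x, retr_mem hℓ hm hdom x.2⟩,
      Continuous.subtype_mk ((continuous_retr ℓ m).comp continuous_subtype_val) _⟩
  let Iinc : C(↥(truncReal G n), ↥(truncReal G (n + 1))) :=
    ⟨fun x => ⟨x, hsub x.2⟩, Continuous.subtype_mk continuous_subtype_val _⟩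
  have hH1 : (Iinc.comp F).Homotopic (ContinuousMap.id ↥(truncReal G (n + 1))) := by
    have cont : Continuous (fun p : unitInterval × ↥(truncReal G (n + 1)) =>
        (p.1 : ℝ) • (p.2 : Fin k → ℝ) + (1 - (p.1 : ℝ)) • retr ℓ m (p.2 : Fin k → ℝ)) := by
      fun_prop
    have memh : ∀ p : unitInterval × ↥(truncReal G (n + 1)),
        (p.1 : ℝ) • (p.2 : Fin k → ℝ) + (1 - (p.1 : ℝ)) • retr ℓ m (p.2 : Fin k → ℝ) ∈
          truncReal G (n + 1) := by
      intro p
      have ht := p.1.2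
      rw [Set.mem_Icc] at ht
      exact seg_mem hℓ hm hdom p.2.2 ht.1 (by linarith [ht.2]) (by ring)
    refine ⟨⟨⟨fun p => ⟨_, memh p⟩, cont.subtype_mk _⟩, ?_, ?_⟩⟩
    · intro x
      apply Subtype.ext
      simp [Iinc, F]
    · intro x
      apply Subtype.ext
      simp
  have hH2 : (F.comp Iinc).Homotopic (ContinuousMap.id ↥(truncReal G n)) := by
    have heq : F.comp Iinc = ContinuousMap.id ↥(truncReal G n) := by
      ext x
      exact congrFun (retr_fix hℓ x.2) _
    rw [heq]
  exact (ContinuousMap.HomotopyEquiv.mk F Iinc hH1 hH2).contractibleSpace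

lemma trunc_zero (hk : 0 < k) (G : SimpleGraph (Fin k)) :
    truncReal G 0 = {stdBasisVec (⟨0, hk⟩ : Fin k)} := by
  ext x
  constructor
  · rintro ⟨hx1, hx2⟩
    obtain ⟨h0, h1, hcl⟩ := (mem_cliqueRealization_iff G x).mp hx1
    have hz : ∀ i : Fin k, i ≠ ⟨0, hk⟩ → x i = 0 := by
      intro i hi
      refine hx2 i ?_
      have : i.val ≠ 0 := fun hc => hi (Fin.ext hc)
      omega
    have hx0 : x ⟨0, hk⟩ = 1 := by
      rw [← h1]
      exact (Finset.sum_eq_single _ (fun i _ hi => hz i hi) (by simp)).symm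
    have : x = stdBasisVec (⟨0, hk⟩ : Fin k) := by
      funext i
      by_cases hi : i = ⟨0, hk⟩
      · subst hi; simp [stdBasisVec, hx0]
      · simp [stdBasisVec, hi, hz i hi]
    simp [this]
  · rintro rfl
    refine ⟨(mem_cliqueRealization_iff G _).mpr ⟨?_, ?_, ?_⟩, ?_⟩
    · intro i; unfold stdBasisVec; positivity
    · simp [stdBasisVec, Finset.sum_ite_eq']
    · intro u hu w hw hne
      simp only [Set.mem_setOf_eq, stdBasisVec, ne_eq, ite_eq_right_iff, one_ne_zero] at hu hw
      exfalso
      apply hne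
      rw [not_forall] at hu hw
      obtain ⟨hu', _⟩ := hu
      obtain ⟨hw', _⟩ := hw
      rw [hu', hw']
    · intro i hi
      have : i ≠ ⟨0, hk⟩ := fun hc => by subst hc; simp at hi
      simp [stdBasisVec, this]

end Main

/-- If the vertices `v_0, …, v_{k-1}` of `G` are ordered so that for every `ℓ ≥ 1` the closed
neighbourhood of `v_ℓ` in the induced subgraph `G_ℓ` on `{v_0, …, v_ℓ}` is contained in the
closed neighbourhood in `G_ℓ` of some earlier vertex, then the clique complex of `G` is
contractible. -/
theorem stmt_1 (k : ℕ) (hk : 0 < k) (G : SimpleGraph (Fin k))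
    (h : ∀ ℓ : Fin k, 0 < ℓ.val → ∃ m : Fin k, ∃ hm : m < ℓ,
      closedNbhd (G.comap (Subtype.val : {i : Fin k // i ≤ ℓ} → Fin k)) ⟨ℓ, le_refl ℓ⟩ ⊆
      closedNbhd (G.comap (Subtype.val : {i : Fin k // i ≤ ℓ} → Fin k)) ⟨m, le_of_lt hm⟩) :
    ContractibleSpace ↥(cliqueRealization G) := by
  have main : ∀ n : ℕ, ContractibleSpace ↥(truncReal G n) := by
    intro n
    induction n with
    | zero =>
      rw [trunc_zero hk G]
      infer_instance
    | succ n ih =>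
      by_cases hkn : n + 1 < k
      · set ℓ : Fin k := ⟨n + 1, hkn⟩ with hℓdef
        obtain ⟨m, hm, hsub⟩ := h ℓ (by simp [hℓdef])
        refine step_contractible (ℓ := ℓ) (m := m) rfl hm ?_ ih
        intro w hw hN
        have := hsub (a := ⟨w, hw⟩) ?_
        · rcases Set.mem_insert_iff.mp this with h' | h'
          · exact Or.inl (congrArg Subtype.val h')
          · exact Or.inr h'
        · rcases hN with h' | h'
          · exact Set.mem_insert_iff.mpr (Or.inl (Subtype.ext h'))
          · exact Set.mem_insert_iff.mpr (Or.inr h')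
      · have heq : truncReal G (n + 1) = truncReal G n := by
          ext x
          constructor
          · rintro ⟨hx1, _⟩
            exact ⟨hx1, fun i hi => absurd i.isLt (by omega)⟩
          · rintro ⟨hx1, _⟩
            exact ⟨hx1, fun i hi => absurd i.isLt (by omega)⟩
        rw [heq]
        exact ih
  have hfin : truncReal G k = cliqueRealization G := by
    ext x
    constructor
    · exact fun hx => hx.1
    · exact fun hx => ⟨hx, fun i hi => absurd i.isLt (by omega)⟩
  rw [← hfin]
  exact main k
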